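/- Let α ≥ 0 and let b : ℝ × ℝ → ℝ be smooth with b(r,λ) > 0 everywhere; write primes for ∂/∂r, and set Q := 2/b − (b′)²/b² + (b′)⁴/(4b³) − (b′)²b″/(2b²) + (b″)²/(2b). Suppose b satisfies the RG-2 angular evolution equation ∂_λ b = −2(1 − b″/2) − (α/2)Q, and that b″ ≤ 2 at a point. Then at that point the area A := 4πb of the sphere satisfies ∂_λ A ≤ −(πα/b)·(b″ − (b′)²/(2b))². -/

import Mathlib

/-- The radial partial derivative `∂g/∂r` of a function `g(r,λ)` of two variables. -/
noncomputable def dr (g : ℝ → ℝ → ℝ) (r l : ℝ) : ℝ := deriv (fun s => g s l) r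

/-- The quadratic curvature contraction
`Q = 2/b − b′²/b² + b′⁴/(4b³) − b′²b″/(2b²) + b″²/(2b)` of the `b`-form metric. -/
noncomputable def Qquad (b : ℝ → ℝ → ℝ) (r l : ℝ) : ℝ :=
  2 / b r l - (dr b r l) ^ 2 / (b r l) ^ 2 + (dr b r l) ^ 4 / (4 * (b r l) ^ 3)
    - (dr b r l) ^ 2 * dr (dr b) r l / (2 * (b r l) ^ 2)
    + (dr (dr b) r l) ^ 2 / (2 * b r l)

/-- Under the RG-2 angular evolution `∂_λ b = −2(1 − b″/2) − (α/2)Q`, at any point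
where `b″ ≤ 2`, the area `A = 4πb` satisfies the purely two-loop bound
`∂_λ A ≤ −(πα/b)(b″ − b′²/(2b))²` (Corollary 3.3 / equation (3.54) of the paper,
spherically symmetric form). -/
theorem rg2_area_two_loop_bound
    (α : ℝ) (hα : 0 ≤ α) (b : ℝ → ℝ → ℝ)
    (hb : ContDiff ℝ (⊤ : ℕ∞) (Function.uncurry b))
    (hbpos : ∀ r l, 0 < b r l)
    (hflow : ∀ r l, deriv (fun t => b r t) l
      = -2 * (1 - dr (dr b) r l / 2) - (α / 2) * Qquad b r l)
    (r₀ l₀ : ℝ)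
    (hb2 : dr (dr b) r₀ l₀ ≤ 2) :
    deriv (fun t => 4 * Real.pi * b r₀ t) l₀
      ≤ -(Real.pi * α / b r₀ l₀)
          * (dr (dr b) r₀ l₀ - (dr b r₀ l₀) ^ 2 / (2 * b r₀ l₀)) ^ 2 := by

  have hdiff : DifferentiableAt ℝ (fun t => b r₀ t) l₀ := by
    have : (fun t => b r₀ t) = (Function.uncurry b) ∘ (fun t => (r₀, t)) := rfl
    rw [this]
    exact (hb.differentiable (by simp)).differentiableAt.comp l₀
      (DifferentiableAt.prodMk (differentiableAt_const _) differentiableAt_id)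
  have hderiv : deriv (fun t => 4 * Real.pi * b r₀ t) l₀
      = 4 * Real.pi * deriv (fun t => b r₀ t) l₀ := by
    simpa using deriv_const_mul (4 * Real.pi) hdiff
  rw [hderiv, hflow]
  set B := b r₀ l₀ with hB
  set p := dr b r₀ l₀
  set c := dr (dr b) r₀ l₀
  have hBpos : 0 < B := hbpos r₀ l₀
  have hQ : Qquad b r₀ l₀
      = (2 / B) * (1 - p ^ 2 / (4 * B)) ^ 2 + (1 / (2 * B)) * (c - p ^ 2 / (2 * B)) ^ 2 := by
    unfold Qquad
    show 2 / B - p ^ 2 / B ^ 2 + p ^ 4 / (4 * B ^ 3) - p ^ 2 * c / (2 * B ^ 2) + c ^ 2 / (2 * B) = _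
    field_simp
    ring
  rw [hQ]
  have hpi := Real.pi_pos
  have h1 : 0 ≤ (1 - p ^ 2 / (4 * B)) ^ 2 := sq_nonneg _
  have h2 : 0 ≤ (c - p ^ 2 / (2 * B)) ^ 2 := sq_nonneg _
  have key : -(Real.pi * α / B) * (c - p ^ 2 / (2 * B)) ^ 2
      = 4 * Real.pi * (-(α / 2) * ((1 / (2 * B)) * (c - p ^ 2 / (2 * B)) ^ 2)) := by
    field_simp; ring
  rw [key]
  have h3 : 0 ≤ α / 2 * (2 / B * (1 - p ^ 2 / (4 * B)) ^ 2) := by positivity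
  have h4 : -2 * (1 - c / 2)
      - α / 2 * (2 / B * (1 - p ^ 2 / (4 * B)) ^ 2 + 1 / (2 * B) * (c - p ^ 2 / (2 * B)) ^ 2)
      ≤ -(α / 2) * (1 / (2 * B) * (c - p ^ 2 / (2 * B)) ^ 2) := by linarith
  have h5 : (0:ℝ) ≤ 4 * Real.pi := by positivity
  exact mul_le_mul_of_nonneg_left h4 h5
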